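/- arXiv:2011.06688 — 2 statements merged into one kernel-verified Lean document; each statement's English description precedes it below -/
import Mathlib

section
/- Let A ∈ ℝ^{m×n}, b ∈ ℝ^m, and suppose A x_⋆ = b. Let I ⊆ {1,…,m} be a nonempty index set with A_I ≠ 0, let x ∈ ℝ^n, and let x₊ = P_{S_I}(x) be the orthogonal projection of x onto the affine subspace S_I = {y ∈ ℝ^n : A_I y = b_I}. Then ‖x₊ − x_⋆‖₂² ≤ ‖x − x_⋆‖₂² − (Σ_{i∈I} (b_i − A_i x)²) / λ_max(A_Iᵀ A_I). -/
open Matrix Finset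

noncomputable def lambdaMax {N : Type*} [Fintype N] [DecidableEq N]
    {M : Matrix N N ℝ} (hM : M.IsHermitian) : ℝ := ⨆ i, hM.eigenvalues i

/-- The row submatrix `A_I` of `A` with rows indexed by the finite set `I`. -/
def rowSub {m n : ℕ} (A : Matrix (Fin m) (Fin n) ℝ) (I : Finset (Fin m)) :
    Matrix {i // i ∈ I} (Fin n) ℝ := A.submatrix Subtype.val id

/-- The Gram matrix `A_Iᵀ * A_I`. -/
def gram {m n : ℕ} (A : Matrix (Fin m) (Fin n) ℝ) (I : Finset (Fin m)) :
    Matrix (Fin n) (Fin n) ℝ := (rowSub A I)ᵀ * rowSub A I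

lemma inner_eq_dot {n : ℕ} (u w : EuclideanSpace ℝ (Fin n)) :
    (inner ℝ u w : ℝ) = (u : Fin n → ℝ) ⬝ᵥ (w : Fin n → ℝ) := by
  simp [PiLp.inner_apply, RCLike.inner_apply, dotProduct, mul_comm]

lemma rayleigh_le {n : ℕ} {G : Matrix (Fin n) (Fin n) ℝ} (hG : G.IsHermitian)
    (v : EuclideanSpace ℝ (Fin n)) :
    (v : Fin n → ℝ) ⬝ᵥ (G *ᵥ v) ≤ lambdaMax hG * ‖v‖ ^ 2 := by
  classical
  set B := hG.eigenvectorBasis with hB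
  set Gv : EuclideanSpace ℝ (Fin n) := (WithLp.equiv 2 (Fin n → ℝ)).symm (G *ᵥ v) with hGv
  have hGsymm : Gᵀ = G := by
    have := hG
    rw [← Matrix.conjTranspose_eq_transpose_of_trivial]; exact this
  have key : ∀ i, (inner ℝ (B i) Gv : ℝ) = hG.eigenvalues i * (inner ℝ (B i) v : ℝ) := by
    intro i
    rw [inner_eq_dot, inner_eq_dot]
    show (B i : Fin n → ℝ) ⬝ᵥ (G *ᵥ (v : Fin n → ℝ))
        = hG.eigenvalues i * ((B i : Fin n → ℝ) ⬝ᵥ (v : Fin n → ℝ))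
    have h3 : (B i : Fin n → ℝ) ⬝ᵥ (G *ᵥ (v : Fin n → ℝ))
        = (G *ᵥ (B i : Fin n → ℝ)) ⬝ᵥ (v : Fin n → ℝ) := by
      rw [dotProduct_mulVec, ← vecMul_transpose, hGsymm]
    rw [h3, show G *ᵥ (B i : Fin n → ℝ) = hG.eigenvalues i • (B i : Fin n → ℝ) from
      hG.mulVec_eigenvectorBasis i]
    simp [dotProduct, Finset.mul_sum, mul_assoc]
  have e0 : (v : Fin n → ℝ) ⬝ᵥ (G *ᵥ v) = (inner ℝ v Gv : ℝ) := (inner_eq_dot v Gv).symm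
  have expand : (v : Fin n → ℝ) ⬝ᵥ (G *ᵥ v)
      = ∑ i, hG.eigenvalues i * (inner ℝ (B i) v : ℝ) ^ 2 := by
    rw [e0, ← B.sum_inner_mul_inner v Gv]
    refine Finset.sum_congr rfl fun i _ => ?_
    rw [key i, real_inner_comm v (B i)]
    ring
  have hnorm : ∑ i, (inner ℝ (B i) v : ℝ) ^ 2 = ‖v‖ ^ 2 := by
    have h1 := B.sum_inner_mul_inner v v
    rw [real_inner_self_eq_norm_sq] at h1
    rw [← h1]
    refine Finset.sum_congr rfl fun i _ => ?_
    rw [real_inner_comm v (B i)]; ring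
  rw [expand, ← hnorm, Finset.mul_sum]
  refine Finset.sum_le_sum fun i _ => ?_
  have hle : hG.eigenvalues i ≤ lambdaMax hG :=
    le_ciSup (Set.Finite.bddAbove (Set.finite_range _)) i
  nlinarith [sq_nonneg (inner ℝ (B i) v : ℝ)]

lemma gram_quad {m n : ℕ} (A : Matrix (Fin m) (Fin n) ℝ) (I : Finset (Fin m))
    (v : Fin n → ℝ) :
    v ⬝ᵥ ((gram A I) *ᵥ v) = ∑ i ∈ I, (A.mulVec v i) ^ 2 := by
  rw [_root_.gram, ← mulVec_mulVec, dotProduct_mulVec, vecMul_transpose]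
  rw [show ((rowSub A I) *ᵥ v) ⬝ᵥ ((rowSub A I) *ᵥ v)
      = ∑ i : {i // i ∈ I}, (A.mulVec v i.1) ^ 2 from ?_]
  · exact Finset.sum_coe_sort I (fun i => (A.mulVec v i) ^ 2)
  · refine Finset.sum_congr rfl fun i _ => ?_
    have : (rowSub A I *ᵥ v) i = A.mulVec v i.1 := by
      simp [rowSub, Matrix.mulVec, Matrix.submatrix, dotProduct]
    rw [this]; ring

/-- One block projection step: if `A x⋆ = b`, `I` is a nonempty index set with `A_I ≠ 0`,
and `x₊` is the orthogonal projection of `x` onto `S_I = {y : A_I y = b_I}` (i.e. the point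
of `S_I` closest to `x`), then
`‖x₊ − x⋆‖² ≤ ‖x − x⋆‖² − (∑_{i∈I} (b_i − A_i x)²)/λ_max(A_Iᵀ A_I)`. -/
theorem block_projection_step
    {m n : ℕ} (A : Matrix (Fin m) (Fin n) ℝ) (b : Fin m → ℝ)
    (xs : EuclideanSpace ℝ (Fin n)) (hxs : A.mulVec xs = b)
    (I : Finset (Fin m)) (hIne : I.Nonempty) (hAI : rowSub A I ≠ 0)
    (hG : (gram A I).IsHermitian)
    (x xp : EuclideanSpace ℝ (Fin n))
    (hmem : ∀ i ∈ I, A.mulVec xp i = b i)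
    (hmin : ∀ y : EuclideanSpace ℝ (Fin n),
      (∀ i ∈ I, A.mulVec y i = b i) → ‖x - xp‖ ≤ ‖x - y‖) :
    ‖xp - xs‖ ^ 2 ≤ ‖x - xs‖ ^ 2 - (∑ i ∈ I, (b i - A.mulVec x i) ^ 2) / lambdaMax hG := by
  classical
  -- orthogonality of `x - xp` to the affine subspace direction
  have horth : (inner ℝ (x - xp) (xs - xp) : ℝ) = 0 := by
    set d : ℝ := inner ℝ (x - xp) (xs - xp) with hd
    set c : ℝ := ‖xs - xp‖ ^ 2 with hc
    have hkey : ∀ t : ℝ, 2 * t * d ≤ t ^ 2 * c := by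
      intro t
      have hy : ∀ i ∈ I, A.mulVec (xp + t • (xs - xp)) i = b i := by
        intro i hi
        have : A.mulVec (xp + t • (xs - xp)) = A.mulVec xp + t • (A.mulVec xs - A.mulVec xp) := by
          rw [Matrix.mulVec_add, Matrix.mulVec_smul, Matrix.mulVec_sub]
        rw [this]
        simp [hmem i hi, hxs]
      have h1 := hmin (xp + t • (xs - xp)) hy
      have h2 : ‖x - (xp + t • (xs - xp))‖ ^ 2
          = ‖x - xp‖ ^ 2 - 2 * t * d + t ^ 2 * c := by
        have : x - (xp + t • (xs - xp)) = (x - xp) - t • (xs - xp) := by abel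
        rw [this, norm_sub_sq_real, inner_smul_right, norm_smul]
        simp [hd, hc, mul_pow]
        ring
      have h3 : ‖x - xp‖ ^ 2 ≤ ‖x - (xp + t • (xs - xp))‖ ^ 2 := by
        have := norm_nonneg (x - xp)
        nlinarith [h1]
      rw [h2] at h3; linarith
    have hc0 : 0 ≤ c := by positivity
    rcases eq_or_lt_of_le hc0 with hc1 | hc1
    · have : xs - xp = 0 := by
        have : ‖xs - xp‖ = 0 := by
          have := hc1.symm
          nlinarith [norm_nonneg (xs - xp)]
        simpa using this
      simp [hd, this]
    · have h := hkey (d / c)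
      have e : d / c * c = d := div_mul_cancel₀ d hc1.ne'
      have h2 : 2 * (d / c) * d * c ≤ (d / c) ^ 2 * c * c :=
        mul_le_mul_of_nonneg_right h hc1.le
      have hd2 : d ^ 2 ≤ 0 := by nlinarith [h2, e]
      have : d ^ 2 = 0 := le_antisymm hd2 (sq_nonneg d)
      exact pow_eq_zero_iff (by norm_num) |>.mp this
  -- Pythagoras
  have hpyth : ‖xp - xs‖ ^ 2 = ‖x - xs‖ ^ 2 - ‖x - xp‖ ^ 2 := by
    have hsplit : x - xs = (x - xp) + (xp - xs) := by abel
    have hinner : (inner ℝ (x - xp) (xp - xs) : ℝ) = 0 := by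
      have : xp - xs = -(xs - xp) := by abel
      rw [this, inner_neg_right, horth, neg_zero]
    rw [hsplit, norm_add_sq_real, hinner]
    ring_nf
  -- the residual bound
  set v : EuclideanSpace ℝ (Fin n) := xp - x with hv
  have hres : ∑ i ∈ I, (b i - A.mulVec x i) ^ 2 = ∑ i ∈ I, (A.mulVec v i) ^ 2 := by
    refine Finset.sum_congr rfl fun i hi => ?_
    have : A.mulVec v i = A.mulVec xp i - A.mulVec x i := by
      rw [hv]
      have : A.mulVec (xp - x) = A.mulVec xp - A.mulVec x := Matrix.mulVec_sub _ _ _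
      simp [this]
    rw [this, hmem i hi]
  have hray : ∑ i ∈ I, (A.mulVec v i) ^ 2 ≤ lambdaMax hG * ‖v‖ ^ 2 := by
    rw [← gram_quad A I v]
    exact rayleigh_le hG v
  -- positivity of lambdaMax
  have hpos : 0 < lambdaMax hG := by
    obtain ⟨i, j, hij⟩ : ∃ i j, rowSub A I i j ≠ 0 := by
      by_contra hcon
      push_neg at hcon
      apply hAI
      ext i j
      exact hcon i j
    set e : EuclideanSpace ℝ (Fin n) := (WithLp.equiv 2 (Fin n → ℝ)).symm (Pi.single j 1) with he
    have h1 : (e : Fin n → ℝ) ⬝ᵥ ((gram A I) *ᵥ e) = ∑ i ∈ I, (A.mulVec (Pi.single j 1) i) ^ 2 := by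
      rw [show (e : Fin n → ℝ) = Pi.single j 1 from rfl]
      exact gram_quad A I _
    have h2 : 0 < ∑ i' ∈ I, (A.mulVec (Pi.single j 1) i') ^ 2 := by
      have hterm : ∀ i' ∈ I, 0 ≤ (A.mulVec (Pi.single j 1) i') ^ 2 := fun _ _ => sq_nonneg _
      have hmem' : i.1 ∈ I := i.2
      have : A.mulVec (Pi.single j 1) i.1 = A i.1 j := by
        simp [Matrix.mulVec, dotProduct, Pi.single_apply]
      refine Finset.sum_pos' hterm ⟨i.1, hmem', ?_⟩
      rw [this]
      have : A i.1 j ≠ 0 := by simpa [rowSub] using hij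
      positivity
    have h3 := rayleigh_le hG e
    rw [h1] at h3
    have hne : ‖e‖ ^ 2 > 0 := by
      have : e ≠ 0 := by
        intro hcon
        have : (e : Fin n → ℝ) j = 0 := by rw [hcon]; rfl
        simp [he] at this
      have := norm_pos_iff.mpr this
      positivity
    nlinarith
  -- combine
  have hdiv : (∑ i ∈ I, (b i - A.mulVec x i) ^ 2) / lambdaMax hG ≤ ‖v‖ ^ 2 := by
    rw [div_le_iff₀ hpos, hres]
    linarith [hray]
  have hvnorm : ‖v‖ = ‖x - xp‖ := by rw [hv]; exact norm_sub_rev _ _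
  rw [hpyth]
  rw [hvnorm] at hdiv
  linarith
end

section
/- (Exact averaged one-step bound for BSKM1.) Let A ∈ ℝ^{m×n}, b ∈ ℝ^m, A x_⋆ = b, x ∈ ℝ^n, and 1 ≤ β ≤ m. For each β-element subset τ ⊆ {1,…,m}, define t(τ), I(τ) and x₊(τ) as follows: t(τ) ∈ τ attains max_{j∈τ}(b_j − A_j x)²; I(τ) = {h ∈ {1,…,m}∖τ : (b_h − A_h x)² ≥ max_{j∈τ}(b_j − A_j x)²} ∪ {t(τ)}; and x₊(τ) is the orthogonal projection of x onto {y : A_{I(τ)} y = b_{I(τ)}}. If A_{I(τ)} ≠ 0 for every such τ, then C(m,β)^{-1} Σ_τ ‖x₊(τ) − x_⋆‖₂² ≤ ‖x − x_⋆‖₂² − C(m,β)^{-1} Σ_τ (|I(τ)| · ‖A_τ x − b_τ‖_∞²) / λ_max(A_{I(τ)}ᵀ A_{I(τ)}), where both sums range over all β-element subsets τ of {1,…,m}. -/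
open Matrix Finset

/-- All subsets of `{0, …, m-1}` of cardinality `β`. -/
def subsetsCard (m β : ℕ) : Finset (Finset (Fin m)) :=
  Finset.powersetCard β (Finset.univ : Finset (Fin m))

lemma rayleigh_le_s5 {N : Type*} [Fintype N] [DecidableEq N] {M : Matrix N N ℝ}
    (hM : M.IsHermitian) (v : N → ℝ) :
    v ⬝ᵥ M *ᵥ v ≤ lambdaMax hM * (v ⬝ᵥ v) := by
  classical
  set U : Matrix N N ℝ := (Matrix.IsHermitian.eigenvectorUnitary hM : Matrix N N ℝ) with hU
  have hUU : U * star U = 1 :=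
    (Matrix.mem_unitaryGroup_iff).mp (Matrix.IsHermitian.eigenvectorUnitary hM).2
  have hstar : star U = Uᵀ := by
    ext i j; simp [Matrix.star_apply]
  set w : N → ℝ := Uᵀ *ᵥ v with hw
  have hvU : ∀ z : N → ℝ, v ⬝ᵥ (U *ᵥ z) = w ⬝ᵥ z := by
    intro z
    rw [dotProduct_mulVec, hw, mulVec_transpose]
  have h1 : M *ᵥ v = U *ᵥ (Matrix.diagonal hM.eigenvalues *ᵥ w) := by
    conv_lhs => rw [hM.spectral_theorem]
    rw [Unitary.conjStarAlgAut_apply, ← hU]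
    rw [RCLike.ofReal_real_eq_id]
    rw [hstar] at *
    rw [← mulVec_mulVec, ← mulVec_mulVec]
    simp [hw]
  have hUw : U *ᵥ w = v := by
    rw [hw, ← hstar, mulVec_mulVec, hUU, one_mulVec]
  have h3 : w ⬝ᵥ w = v ⬝ᵥ v := by
    rw [← hvU w, hUw]
  have hle : ∀ i, hM.eigenvalues i ≤ lambdaMax hM := fun i =>
    le_ciSup (Set.Finite.bddAbove (Set.finite_range _)) i
  calc v ⬝ᵥ M *ᵥ v = w ⬝ᵥ (Matrix.diagonal hM.eigenvalues *ᵥ w) := by rw [h1, hvU]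
    _ = ∑ i, hM.eigenvalues i * (w i * w i) := by
        simp only [dotProduct, mulVec_diagonal]
        apply Finset.sum_congr rfl; intro i _; ring
    _ ≤ ∑ i, lambdaMax hM * (w i * w i) := by
        apply Finset.sum_le_sum
        intro i _
        exact mul_le_mul_of_nonneg_right (hle i) (mul_self_nonneg _)
    _ = lambdaMax hM * (v ⬝ᵥ v) := by rw [← h3]; simp [dotProduct, Finset.mul_sum]

lemma quad_eq {m n : ℕ} (A : Matrix (Fin m) (Fin n) ℝ) (I : Finset (Fin m)) (v : Fin n → ℝ) :
    v ⬝ᵥ (gram A I) *ᵥ v = ∑ i : {i // i ∈ I}, (A.mulVec v i.val) ^ 2 := by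
  rw [_root_.gram, ← mulVec_mulVec, dotProduct_mulVec, vecMul_transpose]
  simp only [dotProduct, sq]
  rfl

lemma lambdaMax_pos {m n : ℕ} (A : Matrix (Fin m) (Fin n) ℝ) (I : Finset (Fin m))
    (hG : (gram A I).IsHermitian) (hB : rowSub A I ≠ 0) : 0 < lambdaMax hG := by
  classical
  have hex : ∃ i j, rowSub A I i j ≠ 0 := by
    by_contra h
    push_neg at h
    exact hB (by ext i j; simpa using h i j)
  obtain ⟨i0, j0, hij⟩ := hex
  set v : Fin n → ℝ := Pi.single j0 1 with hv
  have hvv : v ⬝ᵥ v = 1 := by simp [hv, dotProduct, Pi.single_apply]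
  have hmv : ∀ i : {i // i ∈ I}, A.mulVec v i.val = rowSub A I i j0 := by
    intro i
    simp [hv, mulVec, dotProduct, Pi.single_apply, rowSub, Matrix.submatrix]
  have hpos : 0 < v ⬝ᵥ (gram A I) *ᵥ v := by
    rw [quad_eq]
    have h1 : (rowSub A I i0 j0) ^ 2 ≤ ∑ i : {i // i ∈ I}, (A.mulVec v i.val) ^ 2 := by
      have h := Finset.single_le_sum (f := fun i : {i // i ∈ I} => (A.mulVec v i.val) ^ 2)
        (fun i _ => sq_nonneg _) (Finset.mem_univ i0)
      simpa [hmv i0] using h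
    have h2 : 0 < (rowSub A I i0 j0) ^ 2 := by positivity
    linarith
  have := rayleigh_le_s5 hG v
  rw [hvv, mul_one] at this
  linarith

lemma pyth {n : ℕ} (x xp xs : EuclideanSpace ℝ (Fin n))
    (hmin : ∀ t : ℝ, ‖x - xp‖ ≤ ‖x - (xp + t • (xs - xp))‖) :
    ‖xp - xs‖ ^ 2 = ‖x - xs‖ ^ 2 - ‖x - xp‖ ^ 2 := by
  set c : ℝ := inner ℝ (x - xp) (xs - xp) with hc
  set d : EuclideanSpace ℝ (Fin n) := xs - xp with hd
  have key : ∀ t : ℝ, 0 ≤ t ^ 2 * ‖d‖ ^ 2 - 2 * t * c := by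
    intro t
    have h := hmin t
    have h3 : x - (xp + t • d) = (x - xp) - t • d := by abel
    have h2 : ‖x - xp‖ ^ 2 ≤ ‖(x - xp) - t • d‖ ^ 2 := by
      rw [← h3]
      exact pow_le_pow_left₀ (norm_nonneg _) h 2
    rw [norm_sub_sq_real (x - xp) (t • d), real_inner_smul_right, norm_smul] at h2
    have h5 : (‖t‖ * ‖d‖) ^ 2 = t ^ 2 * ‖d‖ ^ 2 := by
      rw [mul_pow, Real.norm_eq_abs, sq_abs]
    rw [h5, ← hc] at h2
    linarith
  have hc0 : c = 0 := by
    rcases eq_or_lt_of_le (sq_nonneg ‖d‖) with hD | hD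
    · have : d = 0 := by
        have : ‖d‖ = 0 := by nlinarith [norm_nonneg d]
        exact norm_eq_zero.mp this
      rw [hc, hd]
      rw [hd] at this
      rw [this]
      simp
    · have k := key (c / ‖d‖ ^ 2)
      have heq : (c / ‖d‖ ^ 2) ^ 2 * ‖d‖ ^ 2 - 2 * (c / ‖d‖ ^ 2) * c = -(c ^ 2) / ‖d‖ ^ 2 := by
        field_simp
        ring
      rw [heq] at k
      have h1 : 0 ≤ -(c ^ 2) := by
        by_contra hcon
        push_neg at hcon
        have : -(c ^ 2) / ‖d‖ ^ 2 < 0 := div_neg_of_neg_of_pos hcon hD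
        linarith
      have hcc : c ^ 2 = 0 := le_antisymm (by linarith) (sq_nonneg c)
      exact pow_eq_zero_iff two_ne_zero |>.mp hcc
  have h6 : x - xs = (x - xp) - d := by rw [hd]; abel
  have h7 : ‖x - xs‖ ^ 2 = ‖x - xp‖ ^ 2 - 2 * c + ‖d‖ ^ 2 := by
    rw [h6, norm_sub_sq_real, hc]
  have h8 : ‖xp - xs‖ = ‖d‖ := by rw [hd, norm_sub_rev]
  rw [h8, h7, hc0]
  ring

/-- Exact averaged one-step bound for BSKM1: averaging uniformly over all `β`-element
sample sets `τ`,
`C(m,β)⁻¹ Σ_τ ‖x₊(τ) − x⋆‖² ≤ ‖x − x⋆‖² − C(m,β)⁻¹ Σ_τ |I(τ)| ‖A_τ x − b_τ‖_∞² / λ_max(A_{I(τ)}ᵀ A_{I(τ)})`. -/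
theorem bskm1_exact_averaged_step
    {m n : ℕ} (A : Matrix (Fin m) (Fin n) ℝ) (b : Fin m → ℝ)
    (xs : EuclideanSpace ℝ (Fin n)) (hxs : A.mulVec xs = b)
    (x : EuclideanSpace ℝ (Fin n))
    (β : ℕ) (hβ1 : 1 ≤ β) (hβm : β ≤ m)
    (t : Finset (Fin m) → Fin m) (I : Finset (Fin m) → Finset (Fin m))
    (xp : Finset (Fin m) → EuclideanSpace ℝ (Fin n))
    (ht_mem : ∀ τ ∈ subsetsCard m β, t τ ∈ τ)
    (ht_max : ∀ τ ∈ subsetsCard m β,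
      (b (t τ) - A.mulVec x (t τ)) ^ 2 = ⨆ j : τ, (b j - A.mulVec x j) ^ 2)
    (hI : ∀ τ ∈ subsetsCard m β,
      I τ = (Finset.univ \ τ).filter
          (fun h => (b h - A.mulVec x h) ^ 2 ≥ ⨆ j : τ, (b j - A.mulVec x j) ^ 2)
        ∪ {t τ})
    (hp_mem : ∀ τ ∈ subsetsCard m β, ∀ i ∈ I τ, A.mulVec (xp τ) i = b i)
    (hp_min : ∀ τ ∈ subsetsCard m β, ∀ y : EuclideanSpace ℝ (Fin n),
      (∀ i ∈ I τ, A.mulVec y i = b i) → ‖x - xp τ‖ ≤ ‖x - y‖)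
    (hG : ∀ τ, (gram A (I τ)).IsHermitian)
    (hAI : ∀ τ ∈ subsetsCard m β, rowSub A (I τ) ≠ 0) :
    ((m.choose β : ℝ))⁻¹ * ∑ τ ∈ subsetsCard m β, ‖xp τ - xs‖ ^ 2 ≤
      ‖x - xs‖ ^ 2 -
        ((m.choose β : ℝ))⁻¹ * ∑ τ ∈ subsetsCard m β,
          ((I τ).card : ℝ) * (⨆ i : τ, (A.mulVec x i - b i) ^ 2) / lambdaMax (hG τ) := by
  classical
  have key : ∀ τ ∈ subsetsCard m β, ‖xp τ - xs‖ ^ 2 ≤ ‖x - xs‖ ^ 2 -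
      ((I τ).card : ℝ) * (⨆ i : τ, (A.mulVec x i - b i) ^ 2) / lambdaMax (hG τ) := by
    intro τ hτ
    set S : ℝ := ⨆ i : τ, (A.mulVec x i - b i) ^ 2 with hS
    set L : ℝ := lambdaMax (hG τ) with hLdef
    have hL : 0 < L := lambdaMax_pos A (I τ) (hG τ) (hAI τ hτ)
    -- the two sups agree
    have hsups : (⨆ j : τ, (b j - A.mulVec x j) ^ 2) = S := by
      rw [hS]
      exact iSup_congr fun j => by ring
    have hSt : S = (A.mulVec x (t τ) - b (t τ)) ^ 2 := by
      rw [← hsups, ← ht_max τ hτ]; ring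
    -- each index in I τ has residual² ≥ S
    have hSle : ∀ i ∈ I τ, S ≤ (A.mulVec x i - b i) ^ 2 := by
      intro i hi
      rw [hI τ hτ] at hi
      rcases Finset.mem_union.mp hi with h | h
      · have := (Finset.mem_filter.mp h).2
        rw [hsups] at this
        calc S ≤ (b i - A.mulVec x i) ^ 2 := this
          _ = (A.mulVec x i - b i) ^ 2 := by ring
      · rw [Finset.mem_singleton.mp h, hSt]
    -- v = x - xp τ coordinatewise
    set v : Fin n → ℝ := fun j => x j - xp τ j with hv
    have hnv : ‖x - xp τ‖ ^ 2 = v ⬝ᵥ v := by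
      rw [EuclideanSpace.norm_eq, Real.sq_sqrt (by positivity)]
      simp [dotProduct, hv, sq]
    have hAv : ∀ i ∈ I τ, A.mulVec v i = A.mulVec x i - b i := by
      intro i hi
      have hx := hp_mem τ hτ i hi
      have h1 : A.mulVec v i = A.mulVec x i - A.mulVec (xp τ) i := by
        simp [mulVec, dotProduct, hv, mul_sub, Finset.sum_sub_distrib]
      rw [h1, hx]
    -- sum lower bound
    have hsum : ((I τ).card : ℝ) * S ≤ ∑ i : {i // i ∈ I τ}, (A.mulVec v i.val) ^ 2 := by
      have h1 : ∀ i : {i // i ∈ I τ}, S ≤ (A.mulVec v i.val) ^ 2 := by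
        intro i
        rw [hAv i.val i.prop]
        exact hSle i.val i.prop
      have h2 : (Finset.univ : Finset {i // i ∈ I τ}).card • S ≤
          ∑ i : {i // i ∈ I τ}, (A.mulVec v i.val) ^ 2 :=
        Finset.card_nsmul_le_sum _ _ _ (fun i _ => h1 i)
      have h3 : (Finset.univ : Finset {i // i ∈ I τ}).card = (I τ).card := by
        simp
      rw [h3, nsmul_eq_mul] at h2
      exact h2
    have hray := rayleigh_le_s5 (hG τ) v
    rw [quad_eq] at hray
    have hchain : ((I τ).card : ℝ) * S ≤ L * ‖x - xp τ‖ ^ 2 := by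
      rw [hnv]; linarith
    have hdiv : ((I τ).card : ℝ) * S / L ≤ ‖x - xp τ‖ ^ 2 := by
      rw [div_le_iff₀ hL]
      linarith
    -- Pythagoras via minimality
    have hmin : ∀ s : ℝ, ‖x - xp τ‖ ≤ ‖x - (xp τ + s • (xs - xp τ))‖ := by
      intro s
      apply hp_min τ hτ
      intro i hi
      have h1 := hp_mem τ hτ i hi
      have h2 : A.mulVec xs i = b i := congrFun hxs i
      have h3 : A.mulVec (xp τ + s • (xs - xp τ)) i =
          A.mulVec (xp τ) i + s * (A.mulVec xs i - A.mulVec (xp τ) i) := by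
        simp only [mulVec, dotProduct]
        have : ∀ j, A i j * (xp τ + s • (xs - xp τ)) j =
            A i j * xp τ j + s * (A i j * xs j) - s * (A i j * xp τ j) := by
          intro j
          have : (xp τ + s • (xs - xp τ)) j = xp τ j + s * (xs j - xp τ j) := rfl
          rw [this]; ring
        rw [Finset.sum_congr rfl (fun j _ => show A i j * ((xp τ).ofLp + s • (xs.ofLp - (xp τ).ofLp)) j = _ from this j)]
        rw [Finset.sum_sub_distrib, Finset.sum_add_distrib, ← Finset.mul_sum, ← Finset.mul_sum]
        ring
      rw [WithLp.ofLp_add, WithLp.ofLp_smul, WithLp.ofLp_sub, h3, h1, h2]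
      ring
    have hpy := pyth x (xp τ) xs hmin
    rw [hpy]
    linarith
  -- sum up
  have hsumle : ∑ τ ∈ subsetsCard m β, ‖xp τ - xs‖ ^ 2 ≤
      ∑ τ ∈ subsetsCard m β, (‖x - xs‖ ^ 2 -
        ((I τ).card : ℝ) * (⨆ i : τ, (A.mulVec x i - b i) ^ 2) / lambdaMax (hG τ)) :=
    Finset.sum_le_sum key
  have hcard : (subsetsCard m β).card = m.choose β := by
    simp [subsetsCard]
  have hchoose : (0:ℝ) < (m.choose β : ℝ) := by
    exact_mod_cast Nat.choose_pos hβm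
  rw [Finset.sum_sub_distrib, Finset.sum_const, hcard, nsmul_eq_mul] at hsumle
  have hfin := mul_le_mul_of_nonneg_left hsumle (inv_nonneg.2 hchoose.le)
  rw [mul_sub, ← mul_assoc, inv_mul_cancel₀ (ne_of_gt hchoose), one_mul] at hfin
  exact hfin
end
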